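/- An n-Hausdorff space X is n-H-closed if and only if every open ultrafilter U on X satisfies |aU| = n−1. -/

import Mathlib

open Set Topology Function

universe u v

/-- A space is `n`-Hausdorff if any `n` distinct points admit open neighborhoods
with empty intersection. -/
def NHausdorff (X : Type u) [TopologicalSpace X] (n : ℕ) : Prop :=
  ∀ x : Fin n → X, Function.Injective x →
    ∃ U : Fin n → Set X, (∀ i, IsOpen (U i) ∧ x i ∈ U i) ∧ (⋂ i, U i) = (∅ : Set X)

/-- An open filter on `X`: a nonempty family of nonempty open sets closed under
finite intersections and open supersets. -/
structure IsOpenFilter {X : Type u} [TopologicalSpace X] (F : Set (Set X)) : Prop where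
  nonempty : F.Nonempty
  isOpen_mem : ∀ U ∈ F, IsOpen U
  nonempty_mem : ∀ U ∈ F, U.Nonempty
  inter_mem : ∀ U ∈ F, ∀ V ∈ F, U ∩ V ∈ F
  superset_mem : ∀ U ∈ F, ∀ V : Set X, IsOpen V → U ⊆ V → V ∈ F

/-- An open ultrafilter: a maximal open filter. -/
def IsOpenUltrafilter {X : Type u} [TopologicalSpace X] (F : Set (Set X)) : Prop :=
  IsOpenFilter F ∧ ∀ G : Set (Set X), IsOpenFilter G → F ⊆ G → G = F

/-- The adherence of a family of sets: `⋂ {cl U : U ∈ F}`. -/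
def adh {X : Type u} [TopologicalSpace X] (F : Set (Set X)) : Set X :=
  ⋂ U ∈ F, closure U

/-- `X` is `n`-H-closed: `X` is `n`-Hausdorff and closed in every `n`-Hausdorff space
in which it embeds. -/
def NHClosed (X : Type u) [TopologicalSpace X] (n : ℕ) : Prop :=
  NHausdorff X n ∧
    ∀ (Z : Type u) (_ : TopologicalSpace Z) (e : X → Z),
      NHausdorff Z n → IsEmbedding e → IsClosed (Set.range e)


/-!
An open ultrafilter contains every open neighbourhood of each of its adherent points, so `n`
adherent points with separating neighbourhoods would put `∅` into it: `|aU| < n` always. If some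
`aU` has only `k < n - 1` points, adjoin `n - 1 - k` new points having the members of `U` as
neighbourhoods. Any `n` distinct points of the result include a new point and a point of `X`
outside `aU`, which a member of `U` and the complement of its closure separate; so the result is
`n`-Hausdorff, and `X` is dense but not closed in it. Conversely, if `X` is not closed in an
`n`-Hausdorff space `Z`, extend the trace on `X` of the neighbourhoods of some `z ∈ cl X \ X` to an
open ultrafilter `U`; then `z` and the `n - 1` points of `aU` cannot be separated.
-/

section OpenFilter

variable {X : Type*} [TopologicalSpace X] {F : Set (Set X)}

lemma IsOpenFilter.univ_mem (hF : IsOpenFilter F) : univ ∈ F :=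
  let ⟨U, hU⟩ := hF.nonempty
  hF.superset_mem U hU univ isOpen_univ (subset_univ U)

lemma IsOpenFilter.iInter_mem (hF : IsOpenFilter F) {ι : Type*} [Finite ι] {U : ι → Set X}
    (hU : ∀ i, U i ∈ F) : ⋂ i, U i ∈ F := by
  have := Fintype.ofFinite ι
  have h := Finset.inf_induction (s := Finset.univ) (p := (· ∈ F)) hF.univ_mem
    (fun A hA B hB => hF.inter_mem A hA B hB) (fun i _ => hU i)
  simpa only [Finset.inf_set_eq_iInter, Finset.mem_univ, iInter_true] using h

lemma IsOpenFilter.generate_neBot (hF : IsOpenFilter F) : (Filter.generate F).NeBot :=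
  Filter.generate_neBot_iff.2 fun t htF ht => by
    have := ht.to_subtype
    rw [sInter_eq_iInter]
    exact hF.nonempty_mem _ (hF.iInter_mem fun U : t => htF U.2)

lemma isOpenFilter_sUnion_of_isChain {C : Set (Set (Set X))} (hC : ∀ G ∈ C, IsOpenFilter G)
    (hchain : IsChain (· ⊆ ·) C) (hne : C.Nonempty) : IsOpenFilter (⋃₀ C) where
  nonempty :=
    let ⟨G, hG⟩ := hne
    let ⟨U, hU⟩ := (hC G hG).nonempty
    ⟨U, G, hG, hU⟩
  isOpen_mem := fun _ ⟨G, hG, hU⟩ => (hC G hG).isOpen_mem _ hU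
  nonempty_mem := fun _ ⟨G, hG, hU⟩ => (hC G hG).nonempty_mem _ hU
  inter_mem := by
    rintro U ⟨G₁, hG₁, hU⟩ V ⟨G₂, hG₂, hV⟩
    rcases hchain.total hG₁ hG₂ with h | h
    · exact ⟨G₂, hG₂, (hC G₂ hG₂).inter_mem U (h hU) V hV⟩
    · exact ⟨G₁, hG₁, (hC G₁ hG₁).inter_mem U hU V (h hV)⟩
  superset_mem := fun _ ⟨G, hG, hU⟩ V hV hUV => ⟨G, hG, (hC G hG).superset_mem _ hU V hV hUV⟩

lemma IsOpenFilter.exists_isOpenUltrafilter_superset (hF : IsOpenFilter F) :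
    ∃ G, IsOpenUltrafilter G ∧ F ⊆ G := by
  obtain ⟨G, hFG, hG⟩ := zorn_subset_nonempty {G : Set (Set X) | IsOpenFilter G}
    (fun C hC hchain hne => ⟨⋃₀ C, isOpenFilter_sUnion_of_isChain hC hchain hne,
      fun _ => subset_sUnion_of_mem⟩) F hF
  exact ⟨G, ⟨hG.prop, fun G' hG' hGG' => (hG.eq_of_subset hG' hGG').symm⟩, hFG⟩

lemma IsOpenUltrafilter.mem_of_forall_inter_nonempty (hF : IsOpenUltrafilter F) {V : Set X}
    (hV : IsOpen V) (h : ∀ U ∈ F, (V ∩ U).Nonempty) : V ∈ F := by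
  let G : Set (Set X) := {W | IsOpen W ∧ ∃ U ∈ F, V ∩ U ⊆ W}
  have hG : IsOpenFilter G :=
    { nonempty := ⟨V, hV, univ, hF.1.univ_mem, inter_subset_left⟩
      isOpen_mem := fun _ hW => hW.1
      nonempty_mem := fun _ ⟨_, U, hU, hsub⟩ => (h U hU).mono hsub
      inter_mem := fun _ ⟨h₁, U₁, hU₁, hs₁⟩ _ ⟨h₂, U₂, hU₂, hs₂⟩ =>
        ⟨h₁.inter h₂, U₁ ∩ U₂, hF.1.inter_mem U₁ hU₁ U₂ hU₂,
          fun _ hx => ⟨hs₁ ⟨hx.1, hx.2.1⟩, hs₂ ⟨hx.1, hx.2.2⟩⟩⟩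
      superset_mem := fun _ ⟨_, U, hU, hsub⟩ W' hW' hWW' => ⟨hW', U, hU, hsub.trans hWW'⟩ }
  have hFG : F ⊆ G := fun U hU => ⟨hF.1.isOpen_mem U hU, U, hU, inter_subset_right⟩
  rw [← hF.2 G hG hFG]
  exact ⟨hV, univ, hF.1.univ_mem, inter_subset_left⟩

lemma IsOpenUltrafilter.mem_of_mem_adh (hF : IsOpenUltrafilter F) {x : X} (hx : x ∈ adh F)
    {V : Set X} (hV : IsOpen V) (hxV : x ∈ V) : V ∈ F :=
  hF.mem_of_forall_inter_nonempty hV fun U hU =>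
    mem_closure_iff.1 (mem_iInter₂.1 hx U hU) V hV hxV

end OpenFilter

section NHausdorff

variable {X : Type*} [TopologicalSpace X] {n : ℕ}

lemma NHausdorff.exists_finite_subset_iInter_eq_empty (hX : NHausdorff X n) {S : Set X}
    (hS : n ≤ S.encard) : ∃ T ⊆ S, T.Finite ∧
      ∃ U : T → Set X, (∀ t, IsOpen (U t) ∧ (t : X) ∈ U t) ∧ ⋂ t, U t = ∅ := by
  obtain ⟨T, hTS, hTn⟩ := exists_subset_encard_eq hS
  have hT : T.Finite := finite_of_encard_eq_coe hTn
  have := hT.to_subtype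
  let e : T ≃ Fin n := Finite.equivFinOfCardEq <| by
    rw [Nat.card_coe_set_eq, ncard_def, hTn, ENat.toNat_natCast]
  obtain ⟨V, hV, hVe⟩ := hX (fun i => e.symm i) (Subtype.val_injective.comp e.symm.injective)
  refine ⟨T, hTS, hT, fun t => V (e t), fun t => by simpa using hV (e t), ?_⟩
  rwa [e.surjective.iInter_comp V]

lemma IsOpenUltrafilter.encard_adh_lt {F : Set (Set X)} (hF : IsOpenUltrafilter F)
    (hX : NHausdorff X n) : (adh F).encard < n := by
  by_contra! h
  obtain ⟨T, hTS, hT, U, hU, hUe⟩ := hX.exists_finite_subset_iInter_eq_empty h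
  have := hT.to_subtype
  have hmem := hF.1.iInter_mem fun t : T => hF.mem_of_mem_adh (hTS t.2) (hU t).1 (hU t).2
  rw [hUe] at hmem
  exact not_nonempty_empty (hF.1.nonempty_mem ∅ hmem)

lemma exists_iInter_eq_empty_of_disjoint {ι : Type*} {z : ι → X} {i j : ι} {A B : Set X}
    (hA : IsOpen A) (hB : IsOpen B) (hiA : z i ∈ A) (hjB : z j ∈ B) (hAB : Disjoint A B) :
    ∃ U : ι → Set X, (∀ k, IsOpen (U k) ∧ z k ∈ U k) ∧ ⋂ k, U k = ∅ := by
  classical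
  have hij : i ≠ j := by rintro rfl; exact hAB.ne_of_mem hiA hjB rfl
  refine ⟨fun k => if k = i then A else if k = j then B else univ, fun k => ?_, ?_⟩
  · dsimp only
    split_ifs with hki hkj
    · exact ⟨hA, hki ▸ hiA⟩
    · exact ⟨hB, hkj ▸ hjB⟩
    · exact ⟨isOpen_univ, mem_univ _⟩
  · refine eq_empty_of_forall_notMem fun w hw => hAB.ne_of_mem (b := w) ?_ ?_ rfl
    · simpa using mem_iInter.1 hw i
    · simpa [hij.symm] using mem_iInter.1 hw j

end NHausdorff

/-- `X ⊕ P` retopologised so that every point of `P` is a limit of `F`: the traces on `X` of its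
neighbourhoods form the filter generated by `F`. -/
def AdjoinLimits {X : Type*} (_ : Set (Set X)) (P : Type*) : Type _ := X ⊕ P

namespace AdjoinLimits

variable {X : Type*} {F : Set (Set X)} {P : Type*}

def inl : X → AdjoinLimits F P := Sum.inl

def inr : P → AdjoinLimits F P := Sum.inr

lemma inl_injective : Injective (inl : X → AdjoinLimits F P) := Sum.inl_injective

lemma inr_injective : Injective (inr : P → AdjoinLimits F P) := Sum.inr_injective

lemma inl_ne_inr {x : X} {p : P} : (inl x : AdjoinLimits F P) ≠ inr p := Sum.inl_ne_inr

lemma mem_range_inl_or_mem_range_inr (w : AdjoinLimits F P) : w ∈ range inl ∨ w ∈ range inr := by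
  cases w with
  | inl x => exact Or.inl ⟨x, rfl⟩
  | inr p => exact Or.inr ⟨p, rfl⟩

variable [TopologicalSpace X]

instance : TopologicalSpace (AdjoinLimits F P) where
  IsOpen W := IsOpen (inl ⁻¹' W) ∧ ∀ p, inr p ∈ W → inl ⁻¹' W ∈ Filter.generate F
  isOpen_univ := ⟨isOpen_univ, fun _ _ => Filter.univ_mem⟩
  isOpen_inter _ _ h₁ h₂ :=
    ⟨h₁.1.inter h₂.1, fun p hp => Filter.inter_mem (h₁.2 p hp.1) (h₂.2 p hp.2)⟩
  isOpen_sUnion S hS := by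
    refine ⟨by rw [preimage_sUnion]; exact isOpen_biUnion fun W hW => (hS W hW).1, ?_⟩
    rintro p ⟨W, hWS, hpW⟩
    exact Filter.mem_of_superset ((hS W hWS).2 p hpW) (preimage_mono (subset_sUnion_of_mem hWS))

lemma isOpen_image_inl {V : Set X} (hV : IsOpen V) :
    IsOpen (inl '' V : Set (AdjoinLimits F P)) :=
  ⟨by rwa [preimage_image_eq V inl_injective], fun _ ⟨_, _, h⟩ => (inl_ne_inr h).elim⟩

lemma isOpen_range_inr_union_image_inl (hF : IsOpenFilter F) {U : Set X} (hU : U ∈ F) :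
    IsOpen (range inr ∪ inl '' U : Set (AdjoinLimits F P)) := by
  have hpre : inl ⁻¹' (range inr ∪ inl '' U : Set (AdjoinLimits F P)) = U := by
    ext x
    simp [preimage_image_eq U inl_injective, inl_ne_inr.symm]
  refine ⟨?_, fun _ _ => ?_⟩ <;> rw [hpre]
  exacts [hF.isOpen_mem U hU, Filter.mem_generate_of_mem hU]

lemma isEmbedding_inl : IsEmbedding (inl : X → AdjoinLimits F P) := by
  refine ⟨⟨TopologicalSpace.ext_iff.2 fun V => ⟨fun hV => ?_, ?_⟩⟩, inl_injective⟩
  · exact isOpen_induced_iff.2 ⟨_, isOpen_image_inl hV, preimage_image_eq V inl_injective⟩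
  · rintro ⟨W, hW, rfl⟩
    exact hW.1

lemma not_isClosed_range_inl (hF : IsOpenFilter F) [Nonempty P] :
    ¬ IsClosed (range inl : Set (AdjoinLimits F P)) := by
  have := hF.generate_neBot
  obtain ⟨p⟩ := ‹Nonempty P›
  intro hcl
  have hp : (inr p : AdjoinLimits F P) ∈ closure (range inl) :=
    mem_closure_iff.2 fun W hW hpW =>
      let ⟨x, hx⟩ := Filter.nonempty_of_mem (hW.2 p hpW)
      ⟨inl x, hx, x, rfl⟩
  obtain ⟨x, hx⟩ := hcl.closure_subset hp
  exact inl_ne_inr hx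

variable {n : ℕ}

lemma exists_eq_inl_notMem_adh {z : Fin n → AdjoinLimits F P} (hz : Injective z)
    (hcard : (adh F).encard + ENat.card P < n) : ∃ j x, z j = inl x ∧ x ∉ adh F := by
  by_contra! h
  have hsub : range z ⊆ inl '' adh F ∪ range inr := by
    rintro _ ⟨i, rfl⟩
    rcases mem_range_inl_or_mem_range_inr (z i) with ⟨x, hx⟩ | hp
    · exact Or.inl ⟨x, h i x hx.symm, hx⟩
    · exact Or.inr hp
  have hle := hz.encard_range.trans ((encard_le_encard hsub).trans (encard_union_le _ _))
  rw [inl_injective.encard_image, ← image_univ, inr_injective.encard_image,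
    encard_univ, ENat.card_eq_coe_fintype_card, Fintype.card_fin] at hle
  exact hle.not_gt hcard

lemma nHausdorff (hX : NHausdorff X n) (hF : IsOpenFilter F)
    (hcard : (adh F).encard + ENat.card P < n) : NHausdorff (AdjoinLimits F P) n := by
  intro z hz
  by_cases hzX : ∀ i, z i ∈ range inl
  · choose x hx using hzX
    obtain ⟨V, hV, hVe⟩ := hX x fun a b h => hz (by rw [← hx a, ← hx b, h])
    have : Nonempty (Fin n) := ⟨⟨0, Nat.pos_of_ne_zero fun h0 => by simp [h0] at hcard⟩⟩
    refine ⟨fun i => inl '' V i, fun i => ⟨isOpen_image_inl (hV i).1, ?_⟩, ?_⟩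
    · exact hx i ▸ mem_image_of_mem _ (hV i).2
    · rw [← inl_injective.injOn.image_iInter_eq, hVe, image_empty]
  · push Not at hzX
    obtain ⟨i, hi⟩ := hzX
    have hiP : z i ∈ range inr := (mem_range_inl_or_mem_range_inr (z i)).resolve_left hi
    obtain ⟨j, x, hj, hx⟩ := exists_eq_inl_notMem_adh hz hcard
    obtain ⟨U, hU, hxU⟩ : ∃ U ∈ F, x ∉ closure U := by simpa [adh] using hx
    refine exists_iInter_eq_empty_of_disjoint (isOpen_range_inr_union_image_inl hF hU)
      (isOpen_image_inl isClosed_closure.isOpen_compl) (Or.inl hiP)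
      (hj ▸ mem_image_of_mem inl hxU) ?_
    rw [disjoint_union_left]
    refine ⟨disjoint_left.2 ?_, disjoint_image_of_injective inl_injective
      (disjoint_compl_right.mono_left subset_closure)⟩
    rintro _ ⟨p, rfl⟩ ⟨y, -, hy⟩
    exact inl_ne_inr hy

end AdjoinLimits

lemma not_nHClosed_of_encard_adh_add_one_lt {X : Type u} [TopologicalSpace X] {n : ℕ}
    {F : Set (Set X)} (hF : IsOpenFilter F) (h : (adh F).encard + 1 < n) : ¬ NHClosed X n := by
  intro hXc
  obtain ⟨k, hk⟩ := ENat.ne_top_iff_exists.1 (ne_top_of_lt (lt_of_le_of_lt le_self_add h))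
  rw [← hk] at h
  have hkn : k + 1 < n := mod_cast h
  let P := ULift.{u} (Fin (n - 1 - k))
  have : Nonempty P := ⟨⟨⟨0, by omega⟩⟩⟩
  have hcard : (adh F).encard + ENat.card P < n := by
    rw [← hk, ENat.card_ulift, ENat.card_eq_coe_fintype_card, Fintype.card_fin]
    exact_mod_cast (by omega : k + (n - 1 - k) < n)
  exact AdjoinLimits.not_isClosed_range_inl hF
    (hXc.2 _ _ _ (AdjoinLimits.nHausdorff hXc.1 hF hcard) AdjoinLimits.isEmbedding_inl)

section HClosed

variable {X : Type*} [TopologicalSpace X] {n : ℕ}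

lemma exists_isOpenUltrafilter_preimage_mem {Z : Type*} [TopologicalSpace Z] {e : X → Z}
    (he : Continuous e) {z : Z} (hz : z ∈ closure (range e)) :
    ∃ G, IsOpenUltrafilter G ∧ ∀ W, IsOpen W → z ∈ W → e ⁻¹' W ∈ G := by
  let F : Set (Set X) := {V | IsOpen V ∧ ∃ W, IsOpen W ∧ z ∈ W ∧ e ⁻¹' W ⊆ V}
  have hF : IsOpenFilter F :=
    { nonempty := ⟨univ, isOpen_univ, univ, isOpen_univ, mem_univ z, subset_univ _⟩
      isOpen_mem := fun _ hV => hV.1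
      nonempty_mem := fun _ ⟨_, W, hW, hzW, hsub⟩ =>
        let ⟨_, hw, x, hx⟩ := mem_closure_iff.1 hz W hW hzW
        ⟨x, hsub (hx ▸ hw : e x ∈ W)⟩
      inter_mem := fun _ ⟨h₁, W₁, hW₁, hz₁, hs₁⟩ _ ⟨h₂, W₂, hW₂, hz₂, hs₂⟩ =>
        ⟨h₁.inter h₂, W₁ ∩ W₂, hW₁.inter hW₂, ⟨hz₁, hz₂⟩, inter_subset_inter hs₁ hs₂⟩
      superset_mem := fun _ ⟨_, W, hW, hzW, hsub⟩ V' hV' hVV' =>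
        ⟨hV', W, hW, hzW, hsub.trans hVV'⟩ }
  obtain ⟨G, hG, hFG⟩ := hF.exists_isOpenUltrafilter_superset
  exact ⟨G, hG, fun W hW hzW => hFG ⟨hW.preimage he, W, hW, hzW, subset_rfl⟩⟩

lemma isClosed_range_of_le_encard_adh_add_one {Z : Type*} [TopologicalSpace Z]
    (h : ∀ G : Set (Set X), IsOpenUltrafilter G → n ≤ (adh G).encard + 1)
    (hZ : NHausdorff Z n) {e : X → Z} (he : IsEmbedding e) : IsClosed (range e) := by
  refine isClosed_of_closure_subset fun z hz => ?_
  by_contra hzr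
  obtain ⟨G, hG, hGz⟩ := exists_isOpenUltrafilter_preimage_mem he.continuous hz
  have hS : n ≤ (insert z (e '' adh G)).encard := by
    rw [encard_insert_of_notMem fun h => hzr (image_subset_range _ _ h),
      he.injective.encard_image]
    exact h G hG
  obtain ⟨T, hTS, hT, U, hU, hUe⟩ := hZ.exists_finite_subset_iInter_eq_empty hS
  have hUG : ∀ t : T, e ⁻¹' U t ∈ G := by
    intro t
    rcases hTS t.2 with ht | ⟨x, hx, hxt⟩
    · exact hGz _ (hU t).1 (ht ▸ (hU t).2)
    · exact hG.mem_of_mem_adh hx ((hU t).1.preimage he.continuous) (by simpa [hxt] using (hU t).2)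
  have := hT.to_subtype
  obtain ⟨y, hy⟩ := hG.1.nonempty_mem _ (hG.1.iInter_mem hUG)
  rw [← preimage_iInter, hUe] at hy
  exact hy

end HClosed

theorem stmt10_general {X : Type u} [TopologicalSpace X] (n : ℕ)
    (hX : NHausdorff X n) :
    NHClosed X n ↔
      ∀ F : Set (Set X), IsOpenUltrafilter F → (adh F).encard = (n - 1 : ℕ) := by
  refine ⟨fun hXc F hF => ?_, fun h => ⟨hX, fun Z _ e hZ he => ?_⟩⟩
  · have hlt := hF.encard_adh_lt hX
    have hge : ¬ (adh F).encard + 1 < n := fun h =>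
      not_nHClosed_of_encard_adh_add_one_lt hF.1 h hXc
    obtain ⟨k, hk⟩ := ENat.ne_top_iff_exists.1 (ne_top_of_lt hlt)
    rw [← hk] at hlt hge ⊢
    norm_cast at hlt hge ⊢
    omega
  · refine isClosed_range_of_le_encard_adh_add_one (fun G hG => ?_) hZ he
    rw [h G hG]
    norm_cast
    omega

theorem stmt10 {X : Type u} [TopologicalSpace X] (n : ℕ) (hn : 2 ≤ n)
    (hX : NHausdorff X n) :
    NHClosed X n ↔
      ∀ F : Set (Set X), IsOpenUltrafilter F → (adh F).encard = (n - 1 : ℕ) :=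
  stmt10_general n hX
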